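/- For a 5×5 skew-symmetric matrix M with entries in a commutative ring, the vector of signed 4×4 Pfaffians (P₁, −P₂, P₃, −P₄, P₅), where P_i is the Pfaffian of M with row and column i deleted, satisfies M · (P₁, −P₂, P₃, −P₄, P₅)ᵗ = 0; in particular, the columns of M furnish linear syzygies among the five Pfaffians. -/

import Mathlib

/-!
A skew-symmetric 5×5 matrix is determined by its ten entries above the diagonal. In these
coordinates the five signed sub-Pfaffians are explicit quadrics, and each entry of `M · P` is a
sum of twelve cubic monomials that cancel in pairs: it is the Laplace expansion of the Pfaffian
of a 6×6 skew-symmetric matrix with two equal rows.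
-/

/-- The Pfaffian of a 4×4 skew-symmetric matrix `(a_{ij})`:
`a₁₂a₃₄ − a₁₃a₂₄ + a₁₄a₂₃`. -/
def pf4 {R : Type*} [CommRing R] (A : Matrix (Fin 4) (Fin 4) R) : R :=
  A 0 1 * A 2 3 - A 0 2 * A 1 3 + A 0 3 * A 1 2

namespace Matrix

variable {R : Type*} [CommRing R]

def skew5 (a b c d e f g h k l : R) : Matrix (Fin 5) (Fin 5) R :=
  !![0, a, b, c, d; -a, 0, e, f, g; -b, -e, 0, h, k; -c, -f, -h, 0, l; -d, -g, -k, -l, 0]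

theorem eq_skew5_of_skew {M : Matrix (Fin 5) (Fin 5) R} (hskew : ∀ i j, M i j = -M j i)
    (hdiag : ∀ i, M i i = 0) :
    M = skew5 (M 0 1) (M 0 2) (M 0 3) (M 0 4) (M 1 2) (M 1 3) (M 1 4) (M 2 3) (M 2 4)
      (M 3 4) := by
  ext i j
  fin_cases i <;> fin_cases j <;>
    simp [skew5, hdiag, hskew 1 0, hskew 2 0, hskew 3 0, hskew 4 0, hskew 2 1, hskew 3 1,
      hskew 4 1, hskew 3 2, hskew 4 2, hskew 4 3]

def signedSubPfaffians (M : Matrix (Fin 5) (Fin 5) R) : Fin 5 → R :=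
  fun j => (-1) ^ (j : ℕ) * pf4 (M.submatrix j.succAbove j.succAbove)

theorem signedSubPfaffians_skew5 (a b c d e f g h k l : R) :
    signedSubPfaffians (skew5 a b c d e f g h k l) =
      ![e * l - f * k + g * h, -(b * l - c * k + d * h), a * l - c * g + d * f,
        -(a * k - b * g + d * e), a * h - b * f + c * e] := by
  ext j
  fin_cases j <;>
    · simp only [signedSubPfaffians, pf4, skew5, submatrix_apply, Fin.succAbove, of_apply,
        Fin.isValue, Fin.reduceFinMk, Fin.reduceLT, Fin.reduceCastSucc, Fin.reduceSucc, ↓reduceIte,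
        cons_val', cons_val, cons_val_zero, cons_val_one, cons_val_fin_one]
      ring

theorem skew5_mulVec_signedSubPfaffians (a b c d e f g h k l : R) :
    skew5 a b c d e f g h k l *ᵥ signedSubPfaffians (skew5 a b c d e f g h k l) = 0 := by
  rw [signedSubPfaffians_skew5]
  ext i
  fin_cases i <;>
    · simp only [mulVec, dotProduct, Fin.sum_univ_five, skew5, of_apply, Fin.isValue,
        Fin.reduceFinMk, cons_val', cons_val, cons_val_zero, cons_val_one, cons_val_fin_one,
        Pi.zero_apply]
      ring

theorem mulVec_signedSubPfaffians_eq_zero {M : Matrix (Fin 5) (Fin 5) R}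
    (hskew : ∀ i j, M i j = -M j i) (hdiag : ∀ i, M i i = 0) :
    M *ᵥ signedSubPfaffians M = 0 := by
  rw [eq_skew5_of_skew hskew hdiag]
  exact skew5_mulVec_signedSubPfaffians ..

end Matrix

/-- Buchsbaum–Eisenbud: for a 5×5 skew-symmetric matrix `M` over a commutative ring, the
vector of signed 4×4 Pfaffians `(P₁, −P₂, P₃, −P₄, P₅)`, where `Pᵢ` is the Pfaffian of
`M` with row and column `i` deleted, is in the kernel of `M`: the columns of `M` give
linear syzygies among the five Pfaffians. -/
theorem skew5_pfaffian_syzygies (R : Type*) [CommRing R] (M : Matrix (Fin 5) (Fin 5) R)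
    (hskew : ∀ i j, M i j = -M j i) (hdiag : ∀ i, M i i = 0) :
    ∀ i, ∑ j, M i j * ((-1 : R) ^ (j : ℕ) * pf4 (M.submatrix j.succAbove j.succAbove))
      = 0 :=
  congrFun (Matrix.mulVec_signedSubPfaffians_eq_zero hskew hdiag)
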